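/- arXiv:1804.04972 — 2 statements merged into one kernel-verified Lean document; each statement's English description precedes it below -/
import Mathlib

section
/- The power series Ψ_q is p-adically entire: writing Ψ_q(T) = Σ_{i≥1} a_i T^i with a_i ∈ ℤ, one has limsup_{i→∞} |a_i|_p^{1/i} = 0; equivalently v_p(a_i)/i → +∞. -/
/-!
Write `a_n` for the coefficients of `Ψ`. Comparing coefficients of `T^n` (`n ≥ 2`) in the
functional equation, after multiplying by powers of `p`, gives
`a_n = -∑_{j ≥ 1} p^{j(n-1)} [T^n] Ψ^{q^j}`, where only `q^j ≤ n` contributes.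
By induction on `c`, `p^{cn - D_c} ∣ a_n` for all `n` and some constant `D_c`: a bound of slope
`c` for `Ψ` gives the bound `cn - D_c q^j` for `[T^n] Ψ^{q^j}`, and the extra factor
`p^{j(n-1)}` pays for the loss `D_c q^j` while adding one to the slope. Hence `|a_n|_p^{1/n}`
is eventually at most `p^{-(c-1)}` for every `c`.
-/

open PowerSeries Filter

/-- `Ψ ∈ T + T²ℤ[[T]]` satisfies `∑_{j≥0} p^{-j} Ψ(p^j T)^{q^j} = T` (coefficientwise). -/
def IsPsi (p q : ℕ) (Ψ : PowerSeries ℤ) : Prop :=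
  PowerSeries.constantCoeff (R := ℤ) Ψ = 0 ∧ PowerSeries.coeff (R := ℤ) 1 Ψ = 1 ∧
  ∀ n : ℕ,
    (∑ j ∈ Finset.range (n + 1),
      ((p : ℚ) ^ j)⁻¹ *
        PowerSeries.coeff (R := ℚ) n
          ((PowerSeries.rescale ((p : ℚ) ^ j) (Ψ.map (Int.castRingHom ℚ))) ^ (q ^ j)))
      = PowerSeries.coeff (R := ℚ) n (PowerSeries.X : PowerSeries ℚ)

namespace PowerSeries

variable {R : Type*} [CommSemiring R]

theorem coeff_pow_eq_zero_of_lt {φ : R⟦X⟧} (h : constantCoeff φ = 0) {k n : ℕ} (hn : n < k) :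
    coeff n (φ ^ k) = 0 :=
  X_pow_dvd_iff.mp (pow_dvd_pow_of_dvd (X_dvd_iff.mpr h) k) n hn

theorem pow_dvd_coeff_pow {π : R} {c D : ℕ} {φ : R⟦X⟧} (h : ∀ m, π ^ (c * m - D) ∣ coeff m φ)
    (k n : ℕ) : π ^ (c * n - D * k) ∣ coeff n (φ ^ k) := by
  induction k generalizing n with
  | zero =>
    rcases Nat.eq_zero_or_pos n with rfl | hn
    · simp
    · simp [coeff_one, hn.ne']
  | succ k ih =>
    rw [pow_succ, coeff_mul]
    refine Finset.dvd_sum fun x hx => ?_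
    have hle : c * n - D * (k + 1) ≤ (c * x.1 - D * k) + (c * x.2 - D) := by
      rw [← Finset.HasAntidiagonal.mem_antidiagonal.mp hx, mul_add, mul_add]
      omega
    exact (pow_dvd_pow π hle).trans (pow_add π _ _ ▸ mul_dvd_mul (ih x.1) (h x.2))

end PowerSeries

-- For `j ≥ D` the factor `p^{j(n-1)}` absorbs the loss `D q^{j+1}`; the finitely many
-- `j < D` cost at most `D q^D`.
theorem mul_pow_succ_le {q D j n : ℕ} (hn : q ^ (j + 1) ≤ n) :
    D * q ^ (j + 1) ≤ j * (n - 1) + D * q ^ D + D := by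
  rcases le_or_gt (j + 1) D with hjD | hDj
  · have : q ^ (j + 1) ≤ q ^ D := by
      rcases Nat.eq_zero_or_pos q with rfl | hq
      · simp
      · exact Nat.pow_le_pow_right hq hjD
    nlinarith
  · have : D * (q ^ (j + 1) - 1) ≤ j * (n - 1) := Nat.mul_le_mul (by omega) (by omega)
    have := Nat.mul_sub_one D (q ^ (j + 1))
    omega

namespace IsPsi

variable {p q : ℕ} {Ψ : PowerSeries ℤ}

theorem coeff_eq_neg_sum (hp : p ≠ 0) (hΨ : IsPsi p q Ψ) {n : ℕ} (hn : 2 ≤ n) :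
    coeff n Ψ =
      -∑ j ∈ Finset.range n, (p : ℤ) ^ ((j + 1) * (n - 1)) * coeff n (Ψ ^ q ^ (j + 1)) := by
  have hterm (j : ℕ) :
      ((p : ℚ) ^ j)⁻¹ * coeff n ((rescale ((p : ℚ) ^ j) (Ψ.map (Int.castRingHom ℚ))) ^ q ^ j) =
        (((p : ℤ) ^ (j * (n - 1)) * coeff n (Ψ ^ q ^ j) : ℤ) : ℚ) := by
    rw [← map_pow, coeff_rescale, ← map_pow, coeff_map, eq_intCast, ← pow_mul,
      show j * n = j * (n - 1) + j by cases n <;> grind, pow_add]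
    push_cast
    field_simp
  have hsum := hΨ.2.2 n
  rw [coeff_X, if_neg (by omega), Finset.sum_congr rfl fun j _ => hterm j,
    Finset.sum_range_succ'] at hsum
  norm_cast at hsum
  simpa [eq_neg_iff_add_eq_zero, add_comm] using hsum

theorem pow_dvd_coeff_of_pow_dvd_coeff (hp : p ≠ 0) (hΨ : IsPsi p q Ψ) {c D : ℕ}
    (hD : ∀ n, (p : ℤ) ^ (c * n - D) ∣ coeff n Ψ) (n : ℕ) :
    (p : ℤ) ^ ((c + 1) * n - (D * q ^ D + D + 1)) ∣ coeff n Ψ := by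
  rcases le_or_gt n 1 with hn | hn
  · refine (pow_dvd_pow _ ?_).trans (hD n)
    rw [add_mul]
    omega
  rw [hΨ.coeff_eq_neg_sum hp hn, dvd_neg]
  refine Finset.dvd_sum fun j _ => ?_
  rcases le_or_gt (q ^ (j + 1)) n with hqn | hqn
  · have hle : (c + 1) * n - (D * q ^ D + D + 1) ≤
        (j + 1) * (n - 1) + (c * n - D * q ^ (j + 1)) := by
      have := mul_pow_succ_le (D := D) hqn
      rw [add_mul, add_mul]
      omega
    exact (pow_dvd_pow _ hle).trans (pow_add (p : ℤ) _ _ ▸ mul_dvd_mul_left _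
      (pow_dvd_coeff_pow hD _ n))
  · rw [coeff_pow_eq_zero_of_lt hΨ.1 hqn, mul_zero]
    exact dvd_zero _

theorem exists_pow_dvd_coeff (hp : p ≠ 0) (hΨ : IsPsi p q Ψ) (c : ℕ) :
    ∃ D : ℕ, ∀ n, (p : ℤ) ^ (c * n - D) ∣ coeff n Ψ := by
  induction c with
  | zero => exact ⟨0, fun n => by simp⟩
  | succ c ih =>
    obtain ⟨D, hD⟩ := ih
    exact ⟨_, hΨ.pow_dvd_coeff_of_pow_dvd_coeff hp hD⟩

end IsPsi

theorem tendsto_rpow_one_div_of_le_pow_mul {x : ℕ → ℝ} (hx : ∀ n, 0 ≤ x n) {r : ℝ} (hr0 : 0 ≤ r)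
    (hr : r < 1) (h : ∀ m : ℕ, ∀ᶠ n in atTop, x n ≤ (r ^ m) ^ n) :
    Tendsto (fun n : ℕ => x n ^ (1 / (n : ℝ))) atTop (nhds 0) := by
  refine tendsto_order.2 ⟨fun a ha => Eventually.of_forall fun n =>
    ha.trans_le (Real.rpow_nonneg (hx n) _), fun ε hε => ?_⟩
  obtain ⟨m, hm⟩ := exists_pow_lt_of_lt_one hε hr
  filter_upwards [h m, eventually_ne_atTop 0] with n hn hn0
  calc x n ^ (1 / (n : ℝ)) ≤ ((r ^ m) ^ n) ^ (1 / (n : ℝ)) :=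
        Real.rpow_le_rpow (hx n) hn (by positivity)
    _ = r ^ m := by rw [one_div, Real.pow_rpow_inv_natCast (pow_nonneg hr0 m) hn0]
    _ < ε := hm

theorem psi_entire_general (p : ℕ) (hp : Fact p.Prime) (q : ℕ)
    (Ψ : PowerSeries ℤ) (hΨ : IsPsi p q Ψ) :
    Tendsto (fun i : ℕ => ‖((PowerSeries.coeff (R := ℤ) i Ψ : ℤ) : ℚ_[p])‖ ^ (1 / (i : ℝ)))
      atTop (nhds 0) := by
  have hp1 : (1 : ℝ) < p := mod_cast hp.out.one_lt
  refine tendsto_rpow_one_div_of_le_pow_mul (fun _ => norm_nonneg _) (by positivity)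
    (inv_lt_one_of_one_lt₀ hp1) fun m => ?_
  obtain ⟨D, hD⟩ := hΨ.exists_pow_dvd_coeff hp.out.ne_zero (m + 1)
  filter_upwards [eventually_ge_atTop D] with n hn
  have hnorm := (Padic.norm_int_le_pow_iff_dvd _ _).mpr (hD n)
  rw [zpow_neg, zpow_natCast, ← inv_pow] at hnorm
  refine hnorm.trans ?_
  rw [← pow_mul]
  exact pow_le_pow_of_le_one (by positivity) (inv_le_one_of_one_le₀ hp1.le)
    (by rw [add_mul]; omega)

/-- `Ψ_q` is `p`-adically entire: writing `Ψ_q = ∑ a_i T^i` with `a_i ∈ ℤ`,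
`limsup |a_i|_p^{1/i} = 0`, i.e. (the terms being nonnegative) `|a_i|_p^{1/i} → 0`;
equivalently `v_p(a_i)/i → +∞`. -/
theorem psi_entire (p f : ℕ) (hp : Fact p.Prime) (hf : 0 < f) (q : ℕ) (hq : q = p ^ f)
    (Ψ : PowerSeries ℤ) (hΨ : IsPsi p q Ψ) :
    Tendsto (fun i : ℕ => ‖((PowerSeries.coeff (R := ℤ) i Ψ : ℤ) : ℚ_[p])‖ ^ (1 / (i : ℝ)))
      atTop (nhds 0) :=
  psi_entire_general p hp q Ψ hΨ
end

section
/- For every j ≥ 0 and every x ∈ ℂ_p with v_p(x) > −j, one has v_p(p^{−j} Ψ_q(p^j x)^{q^j}) = −j + q^j (j + v_p(x)). In particular, for v_p(x) > 0, v_p(Ψ_q(x)) = v_p(x). -/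
/-!
On the open unit disc of a complete nonarchimedean field the integral coefficients of
`Ψ ∈ T + T²ℤ[[T]]` make the series converge, and `Ψ(x) = x + (tail)` with the tail of norm
at most `‖x‖² < ‖x‖`, so the strict triangle inequality gives `‖Ψ(x)‖ = ‖x‖`.
The formula for general `j` is this identity at `p^j x`, which lies in the unit disc
exactly when `‖x‖ < p^j`.
-/

open PowerSeries

/-- Evaluation of the entire function defined by an integral power series at a point of a
complete nonarchimedean field. -/
noncomputable def psiEval (Ψ : PowerSeries ℤ) {K : Type} [NormedField K] (x : K) : K :=
  ∑' i : ℕ, ((PowerSeries.coeff (R := ℤ) i Ψ : ℤ) : K) * x ^ i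

section Ultrametric

variable {K : Type} [NormedField K] [IsUltrametricDist K]

lemma norm_intCast_mul_pow_le (a : ℤ) (x : K) (n : ℕ) : ‖(a : K) * x ^ n‖ ≤ ‖x‖ ^ n := by
  rw [norm_mul, norm_pow]
  exact mul_le_of_le_one_left (by positivity) (IsUltrametricDist.norm_intCast_le_one K a)

lemma summable_intCast_coeff_mul_pow [CompleteSpace K] (Ψ : PowerSeries ℤ) {x : K}
    (hx : ‖x‖ < 1) : Summable fun i => ((coeff i Ψ : ℤ) : K) * x ^ i :=
  .of_norm_bounded (summable_geometric_of_lt_one (norm_nonneg x) hx)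
    fun i => norm_intCast_mul_pow_le _ x i

lemma norm_tsum_intCast_coeff_mul_pow_add_two_le (Ψ : PowerSeries ℤ) {x : K} (hx : ‖x‖ ≤ 1) :
    ‖∑' i, ((coeff (i + 2) Ψ : ℤ) : K) * x ^ (i + 2)‖ ≤ ‖x‖ ^ 2 :=
  IsUltrametricDist.norm_tsum_le_of_forall_le_of_nonneg (by positivity) fun i =>
    (norm_intCast_mul_pow_le _ x _).trans
      (pow_le_pow_of_le_one (norm_nonneg x) hx (Nat.le_add_left 2 i))

lemma psiEval_eq_add_tsum [CompleteSpace K] {Ψ : PowerSeries ℤ} (h0 : constantCoeff Ψ = 0)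
    (h1 : coeff 1 Ψ = 1) {x : K} (hx : ‖x‖ < 1) :
    psiEval Ψ x = x + ∑' i, ((coeff (i + 2) Ψ : ℤ) : K) * x ^ (i + 2) := by
  have hsum := summable_intCast_coeff_mul_pow Ψ hx
  rw [psiEval, hsum.tsum_eq_zero_add, ((summable_nat_add_iff 1).mpr hsum).tsum_eq_zero_add]
  simp [coeff_zero_eq_constantCoeff, h0, h1]

theorem norm_psiEval_eq [CompleteSpace K] {Ψ : PowerSeries ℤ} (h0 : constantCoeff Ψ = 0)
    (h1 : coeff 1 Ψ = 1) {x : K} (hx : ‖x‖ < 1) : ‖psiEval Ψ x‖ = ‖x‖ := by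
  rw [psiEval_eq_add_tsum h0 h1 hx]
  rcases eq_or_ne x 0 with rfl | hx0
  · simp
  · have htail := norm_tsum_intCast_coeff_mul_pow_add_two_le Ψ hx.le
    have hlt : ‖∑' i, ((coeff (i + 2) Ψ : ℤ) : K) * x ^ (i + 2)‖ < ‖x‖ :=
      htail.trans_lt (pow_lt_self_of_lt_one₀ (norm_pos_iff.mpr hx0) hx one_lt_two)
    rw [IsUltrametricDist.norm_add_eq_max_of_norm_ne_norm hlt.ne', max_eq_left hlt.le]

end Ultrametric

theorem psi_valuation_formula_general (p : ℕ) (hp : p.Prime)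
    (q : ℕ)
    (Ψ : PowerSeries ℤ) (hΨ : IsPsi p q Ψ)
    (K : Type) [NormedField K] [CompleteSpace K]
    (hna : IsUltrametricDist K) (hpK : ‖(p : K)‖ = (p : ℝ)⁻¹) :
    (∀ j : ℕ, ∀ x : K, ‖x‖ < (p : ℝ) ^ (j : ℤ) →
      ‖((p : K) ^ j)⁻¹ * (psiEval Ψ ((p : K) ^ j * x)) ^ q ^ j‖
        = (p : ℝ) ^ ((j : ℤ) - (j : ℤ) * (q ^ j : ℤ)) * ‖x‖ ^ (q ^ j)) ∧
    (∀ x : K, ‖x‖ < 1 → ‖psiEval Ψ x‖ = ‖x‖) := by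
  have hnorm : ∀ x : K, ‖x‖ < 1 → ‖psiEval Ψ x‖ = ‖x‖ := fun _ => norm_psiEval_eq hΨ.1 hΨ.2.1
  refine ⟨fun j x hx => ?_, hnorm⟩
  have hp0 : (p : ℝ) ≠ 0 := by exact_mod_cast hp.ne_zero
  have hpj : ‖(p : K) ^ j‖ = ((p : ℝ) ^ j)⁻¹ := by rw [norm_pow, hpK, inv_pow]
  have hlt : ‖(p : K) ^ j * x‖ < 1 := by
    rw [norm_mul, hpj, inv_mul_lt_one₀ (by positivity)]
    exact_mod_cast hx
  rw [norm_mul, norm_inv, hpj, inv_inv, norm_pow, hnorm _ hlt, norm_mul, hpj, mul_pow,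
    zpow_sub₀ hp0, zpow_mul, ← Nat.cast_pow q j, zpow_natCast, zpow_natCast, inv_pow,
    div_eq_mul_inv]
  ring

/-- for every `j ≥ 0` and `x ∈ ℂ_p` with `v_p(x) > -j`,
`v_p(p^{-j} Ψ_q(p^j x)^{q^j}) = -j + q^j (j + v_p(x))`; in particular for `v_p(x) > 0`,
`v_p(Ψ_q(x)) = v_p(x)`. Here `ℂ_p` is modelled as a complete algebraically closed
nonarchimedean normed field `K` with `‖p‖ = p⁻¹`, and the valuation identities are
expressed multiplicatively: `v_p(x) > -j ↔ ‖x‖ < p^j`, and the conclusion reads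
`‖p^{-j} Ψ_q(p^j x)^{q^j}‖ = p^{j - j·q^j} · ‖x‖^{q^j}`. -/
theorem psi_valuation_formula (p f : ℕ) (hp : p.Prime) (hf : 0 < f)
    (q : ℕ) (hq : q = p ^ f)
    (Ψ : PowerSeries ℤ) (hΨ : IsPsi p q Ψ)
    (K : Type) [NormedField K] [CompleteSpace K] [IsAlgClosed K]
    (hna : IsUltrametricDist K) (hpK : ‖(p : K)‖ = (p : ℝ)⁻¹) :
    (∀ j : ℕ, ∀ x : K, ‖x‖ < (p : ℝ) ^ (j : ℤ) →
      ‖((p : K) ^ j)⁻¹ * (psiEval Ψ ((p : K) ^ j * x)) ^ q ^ j‖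
        = (p : ℝ) ^ ((j : ℤ) - (j : ℤ) * (q ^ j : ℤ)) * ‖x‖ ^ (q ^ j)) ∧
    (∀ x : K, ‖x‖ < 1 → ‖psiEval Ψ x‖ = ‖x‖) :=
  psi_valuation_formula_general p hp q Ψ hΨ K hna hpK
end
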